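/- arXiv:2005.04794 — 6 statements merged into one kernel-verified Lean document; each statement's English description precedes it below -/
import Mathlib

section
/- Let A be a unital C*-algebra and let u, v be unitary elements of A. Then the Jordan product (1/2)(u v + v u) is a unitary element of A if and only if u and v commute. -/
/-!
Put `w = u * v` and `z = v * u`; both are unitary. By the parallelogram identity
`(w - z)⋆(w - z) + (w + z)⋆(w + z) = 2 (w⋆w + z⋆z) = 4`, if `(w + z) / 2` is unitary then
`(w - z)⋆(w - z) = 0`, and the C⋆-identity `‖x⋆x‖ = ‖x‖²` gives `w = z`.
-/

open scoped ComplexConjugate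
open NormedSpace Complex

theorem star_sub_mul_sub_add_star_add_mul_add {R : Type*} [Ring R] [StarRing R] (a b : R) :
    star (a - b) * (a - b) + star (a + b) * (a + b) = 2 * (star a * a + star b * b) := by
  simp only [star_sub, star_add]
  noncomm_ring

theorem eq_of_star_add_mul_add_eq_four {R : Type*} [NormedRing R] [StarRing R] [CStarRing R]
    {a b : R} (ha : star a * a = 1) (hb : star b * b = 1) (hab : star (a + b) * (a + b) = 4) :
    a = b := by
  have parallelogram := star_sub_mul_sub_add_star_add_mul_add a b
  rw [ha, hb, hab] at parallelogram
  have hdiff : star (a - b) * (a - b) = 0 := by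
    rw [eq_sub_of_add_eq parallelogram]
    norm_num
  exact sub_eq_zero.mp ((CStarRing.star_mul_self_eq_zero_iff _).mp hdiff)

theorem star_add_mul_add_eq_four_of_half_smul_mem_unitary {𝕜 A : Type*} [RCLike 𝕜] [Ring A]
    [StarRing A] [Algebra 𝕜 A] [StarModule 𝕜 A] {a b : A}
    (h : (1 / 2 : 𝕜) • (a + b) ∈ unitary A) : star (a + b) * (a + b) = 4 := by
  have hab : a + b = (2 : 𝕜) • ((1 / 2 : 𝕜) • (a + b)) := by
    rw [smul_smul]; norm_num
  rw [hab, star_smul, smul_mul_smul_comm, Unitary.star_mul_self_of_mem h]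
  norm_num [← Algebra.algebraMap_eq_smul_one, map_ofNat]

variable {A : Type*} [NormedRing A] [StarRing A] [CStarRing A] [CompleteSpace A]
  [NormedAlgebra ℂ A] [StarModule ℂ A]

theorem jordan_product_unitary_iff_commute (u v : A)
    (hu : u ∈ unitary A) (hv : v ∈ unitary A) :
    ((1/2 : ℂ) • (u * v + v * u)) ∈ unitary A ↔ u * v = v * u := by
  refine ⟨fun hj => ?_, fun hcomm => ?_⟩
  · exact eq_of_star_add_mul_add_eq_four (Unitary.star_mul_self_of_mem (mul_mem hu hv))
      (Unitary.star_mul_self_of_mem (mul_mem hv hu))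
      (star_add_mul_add_eq_four_of_half_smul_mem_unitary hj)
  · rw [hcomm, ← two_smul ℂ, smul_smul, one_div, inv_mul_cancel₀ two_ne_zero, one_smul]
    exact mul_mem hv hu
end

section
/- Let A be a unital C*-algebra and let u, v be unitaries in A with ‖u − v‖ < 2. Then there exists a unitary w in A such that w u* w = v. -/
/-!
Since `‖v u⋆ - 1‖ = ‖u - v‖ < 2`, the spectrum of the unitary `v u⋆` avoids `-1`, so the
principal logarithm (through the continuous functional calculus) writes `v u⋆ = exp (i x)` with
`x` selfadjoint. Then `t = exp (i x / 2)` is a unitary square root of `v u⋆`, and `w = t u`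
satisfies `w u⋆ w = t² u = v`.
-/

open scoped ComplexConjugate
open NormedSpace Complex

variable {A : Type*} [NormedRing A] [StarRing A] [CStarRing A] [CompleteSpace A]
  [NormedAlgebra ℂ A] [StarModule ℂ A]

lemma Unitary.exists_mul_self_eq_of_norm_sub_one_lt_two {B : Type*} [CStarAlgebra B]
    {s : unitary B} (hs : ‖(s - 1 : B)‖ < 2) : ∃ t : unitary B, t * t = s := by
  set x := Unitary.argSelfAdjoint s
  refine ⟨selfAdjoint.expUnitary ((2⁻¹ : ℝ) • x), ?_⟩
  rw [← (Commute.refl _).expUnitary_add, ← add_smul, ← two_mul, mul_inv_cancel₀ two_ne_zero,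
    one_smul]
  exact expUnitary_argSelfAdjoint hs

lemma Unitary.exists_mul_star_mul_eq_of_norm_sub_lt_two {B : Type*} [CStarAlgebra B]
    (u v : unitary B) (h : ‖(u - v : B)‖ < 2) : ∃ w : unitary B, w * star u * w = v := by
  have hvu : ‖((v * star u : unitary B) - 1 : B)‖ < 2 := by
    have : ((v * star u : unitary B) - 1 : B) = -((u - v : B) * (star u : unitary B)) := by
      simp [sub_mul]
    rwa [this, norm_neg, CStarRing.norm_mul_coe_unitary]
  obtain ⟨t, ht⟩ := exists_mul_self_eq_of_norm_sub_one_lt_two hvu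
  refine ⟨t * u, ?_⟩
  calc t * u * star u * (t * u) = t * t * u := by simp [mul_assoc]
    _ = v := by simp [ht, mul_assoc]

theorem exists_unitary_wuw_eq (u v : A) (hu : u ∈ unitary A) (hv : v ∈ unitary A)
    (h : ‖u - v‖ < 2) :
    ∃ w ∈ unitary A, w * star u * w = v := by
  let : CStarAlgebra A := { }
  obtain ⟨w, hw⟩ := Unitary.exists_mul_star_mul_eq_of_norm_sub_lt_two ⟨u, hu⟩ ⟨v, hv⟩ h
  exact ⟨w, w.2, congrArg Subtype.val hw⟩
end

section
/- Let A be a unital C*-algebra and let u, w be unitaries in A such that w u* w = u and ‖u − w‖ < 2. Then w = u. -/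
/-! Put `v = star u * w`. The relation `w * star u * w = u` says `v * v = 1`, and
`‖1 - v‖ = ‖u - w‖ < 2` because multiplying by the unitary `u` is isometric. Then
`1 + v = 2 • (1 - (1 - v) / 2)` is invertible by the Neumann series, so
`(1 + v) * (v - 1) = v * v - 1 = 0` forces `v = 1`. -/

open scoped ComplexConjugate
open NormedSpace Complex

theorem isUnit_one_add_of_norm_one_sub_lt_two (𝕜 : Type*) {A : Type*} [RCLike 𝕜] [NormedRing A]
    [NormedAlgebra 𝕜 A] [CompleteSpace A] {v : A} (h : ‖1 - v‖ < 2) : IsUnit (1 + v) := by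
  have hsmall : ‖(2⁻¹ : 𝕜) • (1 - v)‖ < 1 := by
    rw [norm_smul, norm_inv, RCLike.norm_two]
    linarith
  have hfactor : 1 + v = Units.mk0 (2 : 𝕜) two_ne_zero • (1 - (2⁻¹ : 𝕜) • (1 - v)) := by
    rw [Units.smul_mk0, smul_sub, smul_smul, mul_inv_cancel₀ two_ne_zero, one_smul, two_smul]
    abel
  rw [hfactor]
  exact (Units.oneSub _ hsmall).isUnit.smul _

theorem eq_one_of_mul_self_eq_one_of_norm_one_sub_lt_two (𝕜 : Type*) {A : Type*} [RCLike 𝕜]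
    [NormedRing A] [NormedAlgebra 𝕜 A] [CompleteSpace A] {v : A} (hv : v * v = 1)
    (h : ‖1 - v‖ < 2) : v = 1 := by
  have hfactor : (1 + v) * (v - 1) = 0 :=
    calc (1 + v) * (v - 1) = v * v - 1 := by noncomm_ring
      _ = 0 := by rw [hv, sub_self]
  exact sub_eq_zero.mp ((isUnit_one_add_of_norm_one_sub_lt_two 𝕜 h).mul_right_eq_zero.mp hfactor)

variable {A : Type*} [NormedRing A] [StarRing A] [CStarRing A] [CompleteSpace A]
  [NormedAlgebra ℂ A] [StarModule ℂ A]

theorem wuw_eq_u_implies_w_eq_u_general (u w : A) (hu : u ∈ unitary A)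
    (h1 : w * star u * w = u) (h2 : ‖u - w‖ < 2) : w = u := by
  have hinvol : (star u * w) * (star u * w) = 1 := by
    rw [mul_assoc, ← mul_assoc w, h1, Unitary.star_mul_self_of_mem hu]
  have hnorm : ‖1 - star u * w‖ < 2 := by
    rwa [← Unitary.star_mul_self_of_mem hu, ← mul_sub,
      CStarRing.norm_mem_unitary_mul _ (Unitary.star_mem hu)]
  have hone := eq_one_of_mul_self_eq_one_of_norm_one_sub_lt_two ℂ hinvol hnorm
  calc w = u * (star u * w) := by rw [← mul_assoc, Unitary.mul_star_self_of_mem hu, one_mul]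
    _ = u := by rw [hone, mul_one]

theorem wuw_eq_u_implies_w_eq_u (u w : A) (hu : u ∈ unitary A) (hw : w ∈ unitary A)
    (h1 : w * star u * w = u) (h2 : ‖u - w‖ < 2) : w = u :=
  wuw_eq_u_implies_w_eq_u_general u w hu h1 h2
end

section
/- Let (X, d_X) and (Y, d_Y) be metric spaces, let a, c ∈ X, and let φ : X → X be a distance-preserving map with φ(c) = c and φ ∘ φ = id_X. Set L = {x ∈ X : d_X(a, x) = d_X(φ(a), x) = d_X(a, c)}. Suppose there is a constant K > 1 such that d_X(φ(x), x) ≥ K · d_X(x, c) for all x ∈ L. If Δ : X → Y is a bijective distance-preserving map and ψ : Y → Y is a bijective distance-preserving map satisfying ψ(Δ(a)) = Δ(φ(a)) and ψ(Δ(φ(a))) = Δ(a), then ψ(Δ(c)) = Δ(c). -/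
/-!
Following Väisälä's proof of the Mazur–Ulam theorem: every isometric equivalence `e` of `X`
fixing `a` and `φ a` moves `c` by at most `2 d(a, c)`, since `e c` stays on the sphere of radius
`d(a, c)` about `a`. The point `e c` even lies in `L`, so the conjugate `e⁻¹ φ e φ`, which again
fixes `a` and `φ a`, moves `c` by `d(φ (e c), e c) ≥ K d(e c, c)`. Iterating gives
`Kⁿ d(e c, c) ≤ 2 d(a, c)` for all `n`, hence `e c = c`. Applied to `e = φ Δ⁻¹ ψ Δ`, this gives
`ψ (Δ c) = Δ c`.
-/

lemma eq_zero_of_forall_pow_mul_le {K t B : ℝ} (hK : 1 < K) (ht : 0 ≤ t)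
    (h : ∀ n : ℕ, K ^ n * t ≤ B) : t = 0 := by
  by_contra hne
  have htpos : 0 < t := lt_of_le_of_ne ht (Ne.symm hne)
  obtain ⟨n, hn⟩ := pow_unbounded_of_one_lt (B / t) hK
  have := h n
  rw [div_lt_iff₀ htpos] at hn
  linarith

section

variable {X : Type*} [MetricSpace X]

lemma IsometryEquiv.dist_apply_le_two_mul {e : X ≃ᵢ X} {a : X} (hea : e a = a) (x : X) :
    dist (e x) x ≤ 2 * dist a x :=
  calc dist (e x) x ≤ dist (e x) (e a) + dist a x := by rw [hea]; exact dist_triangle _ _ _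
    _ = 2 * dist a x := by rw [e.dist_eq, dist_comm]; ring

def IsometryEquiv.reflectConj (φ e : X ≃ᵢ X) : X ≃ᵢ X :=
  φ.trans (e.trans (φ.trans e.symm))

variable {φ e : X ≃ᵢ X} {a c : X}

lemma IsometryEquiv.reflectConj_apply (x : X) : φ.reflectConj e x = e.symm (φ (e (φ x))) :=
  rfl

lemma IsometryEquiv.reflectConj_apply_eq_of_fixed (hφ : Function.Involutive φ) {x : X}
    (hex : e x = x) (hex' : e (φ x) = φ x) : φ.reflectConj e x = x := by
  rw [reflectConj_apply, hex', hφ x, symm_apply_eq, hex]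

lemma IsometryEquiv.mul_dist_le_dist_reflectConj {K : ℝ} (hφc : φ c = c)
    (hL : ∀ x, dist a x = dist (φ a) x → dist a x = dist a c → K * dist x c ≤ dist (φ x) x)
    (hea : e a = a) (hefa : e (φ a) = φ a) :
    K * dist (e c) c ≤ dist (φ.reflectConj e c) c := by
  have hsphere : dist a (e c) = dist a c := by simpa [hea] using e.dist_eq a c
  have hbisector : dist a (e c) = dist (φ a) (e c) :=
    calc dist a (e c) = dist (φ a) (φ c) := by rw [hsphere, φ.dist_eq]
      _ = dist (φ a) (e c) := by rw [hφc, ← e.dist_eq, hefa]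
  have hconj : dist (φ.reflectConj e c) c = dist (φ (e c)) (e c) := by
    rw [← e.dist_eq, reflectConj_apply, hφc, apply_symm_apply]
  rw [hconj]
  exact hL (e c) hbisector hsphere

lemma IsometryEquiv.pow_mul_dist_le {K : ℝ} (hK : 0 ≤ K) (hφ : Function.Involutive φ)
    (hφc : φ c = c)
    (hL : ∀ x, dist a x = dist (φ a) x → dist a x = dist a c → K * dist x c ≤ dist (φ x) x)
    (hea : e a = a) (hefa : e (φ a) = φ a) (n : ℕ) : K ^ n * dist (e c) c ≤ 2 * dist a c := by
  induction n generalizing e with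
  | zero => simpa using e.dist_apply_le_two_mul hea c
  | succ n ih =>
    have hconj := ih (reflectConj_apply_eq_of_fixed hφ hea hefa)
      (reflectConj_apply_eq_of_fixed hφ hefa (by rwa [hφ a]))
    calc K ^ (n + 1) * dist (e c) c = K ^ n * (K * dist (e c) c) := by ring
      _ ≤ K ^ n * dist (φ.reflectConj e c) c :=
        mul_le_mul_of_nonneg_left (mul_dist_le_dist_reflectConj hφc hL hea hefa)
          (pow_nonneg hK n)
      _ ≤ 2 * dist a c := hconj

lemma IsometryEquiv.apply_eq_of_fixed {K : ℝ} (hK : 1 < K) (hφ : Function.Involutive φ)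
    (hφc : φ c = c)
    (hL : ∀ x, dist a x = dist (φ a) x → dist a x = dist a c → K * dist x c ≤ dist (φ x) x)
    (hea : e a = a) (hefa : e (φ a) = φ a) : e c = c :=
  dist_eq_zero.mp <| eq_zero_of_forall_pow_mul_le hK dist_nonneg
    fun n => pow_mul_dist_le (by linarith) hφ hφc hL hea hefa n

end

theorem metric_group_fixed_point {X Y : Type*} [MetricSpace X] [MetricSpace Y]
    (a c : X) (φ : X → X) (hφ : Isometry φ) (hφc : φ c = c)
    (hφφ : φ ∘ φ = id)
    (K : ℝ) (hK : 1 < K)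
    (hL : ∀ x, dist a x = dist (φ a) x → dist a x = dist a c →
      K * dist x c ≤ dist (φ x) x)
    (Δ : X → Y) (hΔ : Function.Bijective Δ) (hΔd : Isometry Δ)
    (ψ : Y → Y) (hψ : Function.Bijective ψ) (hψd : Isometry ψ)
    (h1 : ψ (Δ a) = Δ (φ a)) (h2 : ψ (Δ (φ a)) = Δ a) :
    ψ (Δ c) = Δ c := by
  have hφinv : Function.Involutive φ := congrFun hφφ
  let φe : X ≃ᵢ X := ⟨hφinv.toPerm, hφ⟩
  let Δe : X ≃ᵢ Y := ⟨Equiv.ofBijective Δ hΔ, hΔd⟩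
  let ψe : Y ≃ᵢ Y := ⟨Equiv.ofBijective ψ hψ, hψd⟩
  let e : X ≃ᵢ X := Δe.trans (ψe.trans (Δe.symm.trans φe))
  have he : ∀ x, e x = φ (Δe.symm (ψ (Δ x))) := fun _ => rfl
  have hΔe : ∀ x, Δe.symm (Δ x) = x := Δe.symm_apply_apply
  have hec : e c = c :=
    e.apply_eq_of_fixed (φ := φe) hK hφinv hφc hL
      (by rw [he, h1, hΔe, hφinv]) (show e (φ a) = φ a by rw [he, h2, hΔe])
  have hψc : Δe.symm (ψ (Δ c)) = c := hφinv.injective (by rw [← he, hec, hφc])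
  rw [← Δe.apply_symm_apply (ψ (Δ c)), hψc]
  rfl
end

section
/- Let H be a complex Hilbert space and let u, v be unitary operators on H with ‖u − v‖ < 1/2. Set K := 2 − 2‖u − v‖ (so K > 1). Then for every unitary w on H satisfying ‖u − w‖ = ‖v u⁻¹ v − w‖ = ‖u − v‖, one has ‖v w⁻¹ v − w‖ ≥ K · ‖w − v‖. -/
/-!
Put `a = v⋆ w`, a unitary. Left multiplication by the unitary `v` is isometric, so
`‖w - v‖ = ‖a - 1‖` and `‖v w⋆ v - w‖ = ‖a⋆ - a‖ = ‖a² - 1‖`. The identity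
`a² - 1 = 2 (a - 1) + (a - 1)²` gives `‖a² - 1‖ ≥ (2 - ‖a - 1‖) ‖a - 1‖`, and
`‖w - v‖ ≤ ‖w - u‖ + ‖u - v‖ = 2 ‖u - v‖` finishes the estimate.
-/

section NormedRing

variable {A : Type*} [NormedRing A] [NormedSpace ℝ A]

theorem two_sub_norm_sub_one_mul_le_norm_mul_self_sub_one (a : A) :
    (2 - ‖a - 1‖) * ‖a - 1‖ ≤ ‖a * a - 1‖ := by
  have hid : (2 : ℝ) • (a - 1) = (a * a - 1) - (a - 1) * (a - 1) := by
    rw [two_smul]; noncomm_ring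
  have h2 : 2 * ‖a - 1‖ ≤ ‖a * a - 1‖ + ‖a - 1‖ * ‖a - 1‖ :=
    calc 2 * ‖a - 1‖ = ‖(a * a - 1) - (a - 1) * (a - 1)‖ := by
          rw [← hid, norm_smul, Real.norm_two]
      _ ≤ ‖a * a - 1‖ + ‖(a - 1) * (a - 1)‖ := norm_sub_le _ _
      _ ≤ ‖a * a - 1‖ + ‖a - 1‖ * ‖a - 1‖ := by gcongr; exact norm_mul_le _ _
  linarith

end NormedRing

section CStarRing

variable {A : Type*} [NormedRing A] [StarRing A] [CStarRing A] {v : A}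

theorem norm_star_sub_self_of_mem_unitary {a : A} (ha : a ∈ unitary A) :
    ‖star a - a‖ = ‖a * a - 1‖ := by
  have h : star a * (a * a - 1) = a - star a := by
    rw [mul_sub, ← mul_assoc, Unitary.star_mul_self_of_mem ha, one_mul, mul_one]
  rw [norm_sub_rev, ← h, CStarRing.norm_mem_unitary_mul _ (Unitary.star_mem ha)]

theorem norm_sub_eq_norm_star_mul_sub_one (hv : v ∈ unitary A) (w : A) :
    ‖w - v‖ = ‖star v * w - 1‖ := by
  rw [← CStarRing.norm_mem_unitary_mul (star v * w - 1) hv, mul_sub, ← mul_assoc,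
    Unitary.mul_star_self_of_mem hv, one_mul, mul_one]

theorem norm_mul_star_mul_sub_eq_norm_star_sub_self (hv : v ∈ unitary A) (w : A) :
    ‖v * star w * v - w‖ = ‖star (star v * w) - star v * w‖ := by
  rw [← CStarRing.norm_mem_unitary_mul (star (star v * w) - star v * w) hv, star_mul, star_star,
    mul_sub, ← mul_assoc, ← mul_assoc, Unitary.mul_star_self_of_mem hv, one_mul]

theorem two_sub_norm_sub_mul_norm_sub_le_norm_mul_star_mul_sub [NormedSpace ℝ A]
    (hv : v ∈ unitary A) {w : A} (hw : w ∈ unitary A) :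
    (2 - ‖w - v‖) * ‖w - v‖ ≤ ‖v * star w * v - w‖ := by
  have ha : star v * w ∈ unitary A := mul_mem (Unitary.star_mem hv) hw
  rw [norm_mul_star_mul_sub_eq_norm_star_sub_self hv, norm_star_sub_self_of_mem_unitary ha,
    norm_sub_eq_norm_star_mul_sub_one hv]
  exact two_sub_norm_sub_one_mul_le_norm_mul_self_sub_one _

end CStarRing

open NormedSpace Complex

theorem hatori_molnar_condition_B_general {H : Type*} [NormedAddCommGroup H]
    [InnerProductSpace ℂ H] [CompleteSpace H]
    (u v : H →L[ℂ] H) (hv : v ∈ unitary (H →L[ℂ] H)) :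
    ∀ w ∈ unitary (H →L[ℂ] H),
      ‖u - w‖ = ‖v * star u * v - w‖ → ‖u - w‖ = ‖u - v‖ →
        (2 - 2 * ‖u - v‖) * ‖w - v‖ ≤ ‖v * star w * v - w‖ := by
  intro w hw _ hwu
  have hwv : ‖w - v‖ ≤ 2 * ‖u - v‖ :=
    calc ‖w - v‖ ≤ ‖w - u‖ + ‖u - v‖ := norm_sub_le_norm_sub_add_norm_sub _ _ _
      _ = 2 * ‖u - v‖ := by rw [norm_sub_rev, hwu, two_mul]
  calc (2 - 2 * ‖u - v‖) * ‖w - v‖ ≤ (2 - ‖w - v‖) * ‖w - v‖ := by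
        gcongr
    _ ≤ ‖v * star w * v - w‖ := two_sub_norm_sub_mul_norm_sub_le_norm_mul_star_mul_sub hv hw

theorem hatori_molnar_condition_B {H : Type*} [NormedAddCommGroup H]
    [InnerProductSpace ℂ H] [CompleteSpace H]
    (u v : H →L[ℂ] H) (hu : u ∈ unitary (H →L[ℂ] H)) (hv : v ∈ unitary (H →L[ℂ] H))
    (huv : ‖u - v‖ < 1/2) :
    ∀ w ∈ unitary (H →L[ℂ] H),
      ‖u - w‖ = ‖v * star u * v - w‖ → ‖u - w‖ = ‖u - v‖ →
        (2 - 2 * ‖u - v‖) * ‖w - v‖ ≤ ‖v * star w * v - w‖ :=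
  hatori_molnar_condition_B_general u v hv
end

section
/- Let A be a unital C*-algebra and suppose {u(t) : t ∈ ℝ} is a family of unitaries in A with u(0) = 1 and u(t) u(s) u(t) = u(2t + s) for all s, t ∈ ℝ. Then u(t)* = u(t)⁻¹ = u(−t) for all t ∈ ℝ, and u(t + s) = u(t) u(s) = u(s) u(t) for all rational t, s. -/
open scoped ComplexConjugate
open NormedSpace Complex

variable {A : Type*} [NormedRing A] [StarRing A] [CStarRing A] [CompleteSpace A]
  [NormedAlgebra ℂ A] [StarModule ℂ A]

/-! The relation `w t * w s * w t = w (2 * t + s)` with `w 0 = 1` makes `w (-t)` inverse to `w t`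
and `w (n * x) = w x ^ n`, by induction on `n` in steps of two. Hence `m ↦ w (m * x)` is a
homomorphism `ℤ → G`, and any two rationals are integer multiples of a common `x`, so `w` is
additive and commutative on `ℚ`. -/

theorem Rat.exists_cast_eq_intCast_mul_pair (q r : ℚ) :
    ∃ (x : ℝ) (a b : ℤ), (q : ℝ) = a * x ∧ (r : ℝ) = b * x := by
  refine ⟨1 / (q.den * r.den), q.num * r.den, r.num * q.den, ?_, ?_⟩ <;>
  · rw [Rat.cast_def]
    push_cast
    field_simp

section JordanRelation

variable {G : Type*} [Group G] {w : ℝ → G}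

theorem map_neg_eq_inv_of_jordan (hw : ∀ t s, w t * w s * w t = w (2 * t + s)) (t : ℝ) :
    w (-t) = (w t)⁻¹ := by
  have h : w t * w (-t) * w t = w t := by rw [hw]; ring_nf
  exact eq_inv_of_mul_eq_one_right (mul_eq_right.mp h)

theorem map_natCast_mul_of_jordan (h0 : w 0 = 1) (hw : ∀ t s, w t * w s * w t = w (2 * t + s))
    (x : ℝ) : ∀ n : ℕ, w (n * x) = w x ^ n
  | 0 => by simpa using h0
  | 1 => by simp
  | n + 2 => by
    rw [pow_succ', pow_succ, ← mul_assoc, ← map_natCast_mul_of_jordan h0 hw x n, hw]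
    push_cast
    ring_nf

theorem map_intCast_mul_of_jordan (h0 : w 0 = 1) (hw : ∀ t s, w t * w s * w t = w (2 * t + s))
    (x : ℝ) (m : ℤ) : w (m * x) = w x ^ m := by
  obtain ⟨n, rfl | rfl⟩ := m.eq_nat_or_neg
  · simpa using map_natCast_mul_of_jordan h0 hw x n
  · rw [Int.cast_neg, neg_mul, map_neg_eq_inv_of_jordan hw, zpow_neg, Int.cast_natCast,
      map_natCast_mul_of_jordan h0 hw, zpow_natCast]

theorem map_ratCast_add_of_jordan (h0 : w 0 = 1) (hw : ∀ t s, w t * w s * w t = w (2 * t + s))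
    (q r : ℚ) : w (q + r) = w q * w r ∧ Commute (w q) (w r) := by
  obtain ⟨x, a, b, hq, hr⟩ := Rat.exists_cast_eq_intCast_mul_pair q r
  have hqr : (q : ℝ) + r = ((a + b : ℤ) : ℝ) * x := by rw [hq, hr]; push_cast; ring
  rw [hqr, hq, hr, map_intCast_mul_of_jordan h0 hw, map_intCast_mul_of_jordan h0 hw,
    map_intCast_mul_of_jordan h0 hw, zpow_add]
  exact ⟨rfl, Commute.zpow_zpow_self _ _ _⟩

end JordanRelation

theorem unitary_family_star_and_rational_additivity (u : ℝ → A)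
    (hu : ∀ t, u t ∈ unitary A) (h0 : u 0 = 1)
    (hgroup : ∀ t s : ℝ, u t * u s * u t = u (2 * t + s)) :
    (∀ t : ℝ, star (u t) = u (-t) ∧ u t * u (-t) = 1 ∧ u (-t) * u t = 1) ∧
      (∀ q r : ℚ, u (q + r) = u q * u r ∧ u q * u r = u r * u q) := by
  let w : ℝ → unitary A := fun t => ⟨u t, hu t⟩
  have hw0 : w 0 = 1 := Subtype.ext h0
  have hw : ∀ t s, w t * w s * w t = w (2 * t + s) := fun t s => Subtype.ext (hgroup t s)
  refine ⟨fun t => ?_, fun q r => ?_⟩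
  · have hstar : star (u t) = u (-t) :=
      congrArg Subtype.val ((Unitary.star_eq_inv (w t)).trans (map_neg_eq_inv_of_jordan hw t).symm)
    rw [← hstar]
    exact ⟨rfl, Unitary.mul_star_self_of_mem (hu t), Unitary.star_mul_self_of_mem (hu t)⟩
  · obtain ⟨hadd, hcomm⟩ := map_ratCast_add_of_jordan hw0 hw q r
    exact ⟨congrArg Subtype.val hadd, congrArg Subtype.val hcomm.eq⟩
end
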